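/- arXiv:2004.05410 — 9 statements merged into one kernel-verified Lean document; each statement's English description precedes it below -/
import Mathlib

section
/- For every graph H with at least one edge, every H-saturated graph G on n vertices satisfies |E(G)| ≥ ((wt(H)-1)/2)·n − (wt(H)² − 4·wt(H) + 5)/2, provided wt(H) ≥ 2. -/
open SimpleGraph

/-- `H` has a copy in `G`: an injective graph homomorphism (i.e. a subgraph isomorphic to `H`). -/
def hasCopy {α β : Type*} (H : SimpleGraph α) (G : SimpleGraph β) : Prop :=
  ∃ f : H →g G, Function.Injective f

/-- `G` is `H`-saturated: `H`-free, and adding any missing edge creates a copy of `H`. -/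
def isSat {α β : Type*} (H : SimpleGraph α) (G : SimpleGraph β) : Prop :=
  ¬ hasCopy H G ∧ ∀ x y : β, x ≠ y → ¬ G.Adj x y →
    hasCopy H (G ⊔ SimpleGraph.fromEdgeSet {s(x, y)})

/-- The weight of an edge `uv`: with `deg u ≤ deg v`,
`wt(uv) = 2|N(u) ∩ N(v)| + |N(v) \ N(u)|`. -/
noncomputable def edgeWt {α : Type*} (H : SimpleGraph α) (u v : α) : ℕ :=
  if (H.neighborSet u).ncard ≤ (H.neighborSet v).ncard then
    2 * (H.neighborSet u ∩ H.neighborSet v).ncard + ((H.neighborSet v) \ (H.neighborSet u)).ncard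
  else
    2 * (H.neighborSet u ∩ H.neighborSet v).ncard + ((H.neighborSet u) \ (H.neighborSet v)).ncard

/-- The weight of a graph: the minimum weight of an edge. -/
noncomputable def graphWt {α : Type*} (H : SimpleGraph α) : ℕ :=
  sInf {w | ∃ u v, H.Adj u v ∧ w = edgeWt H u v}

/-- The saturation number: minimum number of edges of an `H`-saturated graph on `n` vertices. -/
noncomputable def satNum {α : Type*} (H : SimpleGraph α) (n : ℕ) : ℕ :=
  sInf {m | ∃ G : SimpleGraph (Fin n), isSat H G ∧ Nat.card G.edgeSet = m}

/-- The graph obtained from `H` by adding a dominating vertex (`none`). -/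
def addDom {α : Type*} (H : SimpleGraph α) : SimpleGraph (Option α) :=
  SimpleGraph.fromRel (fun x y => x = none ∨ ∃ u v, x = some u ∧ y = some v ∧ H.Adj u v)

/-!
If `xy` is a non-edge of an `H`-saturated graph `G`, every copy of `H` in `G + xy` maps some edge
`uv` of `H` onto `xy`, so comparing neighbourhoods gives
`wt(H) ≤ wt(uv) ≤ max(deg x, deg y) + |N(x) ∩ N(y)| + 1`.
Fix `x` of minimum degree `δ` and sum this over the `b = n - 1 - δ` non-neighbours `y` of `x`;
double counting the edges between `N(x)` and those `y` turns the sum into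
`wt(H) b + 2δ ≤ 2|E(G)| + b`. Together with `δ n ≤ 2|E(G)|` this yields the bound, whose
additive constant is the worst case `δ = wt(H) - 2`.
-/

namespace SimpleGraph

variable {α β : Type*} {H : SimpleGraph α} {G : SimpleGraph β}

theorem edgeWt_eq [Finite α] (u v : α) :
    edgeWt H u v = max (H.neighborSet u).ncard (H.neighborSet v).ncard
      + (H.commonNeighbors u v).ncard := by
  have hu := Set.ncard_inter_add_ncard_sdiff_eq_ncard (H.neighborSet u) (H.neighborSet v)
  have hv := Set.ncard_inter_add_ncard_sdiff_eq_ncard (H.neighborSet v) (H.neighborSet u)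
  rw [Set.inter_comm] at hv
  rw [edgeWt, commonNeighbors_eq]
  split_ifs <;> omega

theorem neighborSet_sup_edge_left {x y : β} (hxy : x ≠ y) :
    (G ⊔ edge x y).neighborSet x = insert y (G.neighborSet x) := by
  ext z
  by_cases hz : z = y <;> simp [edge_adj, hz, hxy, eq_comm]

theorem commonNeighbors_sup_edge {x y : β} (hxy : x ≠ y) :
    (G ⊔ edge x y).commonNeighbors x y = G.commonNeighbors x y := by
  rw [commonNeighbors_eq, commonNeighbors_eq, neighborSet_sup_edge_left hxy, edge_comm,
    neighborSet_sup_edge_left hxy.symm, Set.insert_inter_of_notMem, Set.inter_insert_of_notMem]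
  · simp
  · simp [hxy.symm]

theorem ncard_neighborSet_le_of_injective [Finite β] (f : H →g G) (hf : Function.Injective f)
    (a : α) : (H.neighborSet a).ncard ≤ (G.neighborSet (f a)).ncard :=
  Set.ncard_le_ncard_of_injOn f (fun _ hb => f.map_adj hb) hf.injOn

theorem ncard_commonNeighbors_le_of_injective [Finite β] (f : H →g G)
    (hf : Function.Injective f) (a b : α) :
    (H.commonNeighbors a b).ncard ≤ (G.commonNeighbors (f a) (f b)).ncard :=
  Set.ncard_le_ncard_of_injOn f (fun _ hc => ⟨f.map_adj hc.1, f.map_adj hc.2⟩) hf.injOn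

theorem exists_adj_map_eq_of_not_hasCopy {x y : β} (f : H →g G ⊔ edge x y)
    (hf : Function.Injective f) (hH : ¬ hasCopy H G) :
    ∃ u v, H.Adj u v ∧ f u = x ∧ f v = y := by
  by_contra! h
  refine hH ⟨⟨f, fun {a b} hab => ?_⟩, hf⟩
  rcases f.map_adj hab with hG | hxy
  · exact hG
  · rcases ((edge_adj ..).1 hxy).1 with ⟨ha, hb⟩ | ⟨hb, ha⟩
    · exact absurd hb (h a b hab ha)
    · exact absurd hb (h b a hab.symm ha)

theorem ncard_neighborSet_eq_degree [Fintype β] [DecidableRel G.Adj] (x : β) :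
    (G.neighborSet x).ncard = G.degree x := by
  rw [← card_neighborFinset_eq_degree, ← Set.ncard_coe_finset, coe_neighborFinset]

theorem ncard_neighborSet_sup_edge_le [Fintype β] [DecidableRel G.Adj] {x y : β} (hxy : x ≠ y) :
    ((G ⊔ edge x y).neighborSet x).ncard ≤ G.degree x + 1 := by
  rw [neighborSet_sup_edge_left hxy, ← ncard_neighborSet_eq_degree]
  exact Set.ncard_insert_le _ _

theorem ncard_commonNeighbors_eq_card_inter [Fintype β] [DecidableEq β] [DecidableRel G.Adj]
    (x y : β) :
    (G.commonNeighbors x y).ncard = (G.neighborFinset x ∩ G.neighborFinset y).card := by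
  rw [← Set.ncard_coe_finset, Finset.coe_inter, coe_neighborFinset, coe_neighborFinset,
    commonNeighbors_eq]

theorem graphWt_le_of_isSat [Fintype β] [DecidableEq β] [DecidableRel G.Adj] (hsat : isSat H G)
    {x y : β} (hxy : x ≠ y) (hna : ¬ G.Adj x y) :
    graphWt H ≤ max (G.degree x) (G.degree y)
      + (G.neighborFinset x ∩ G.neighborFinset y).card + 1 := by
  obtain ⟨f, hf⟩ : hasCopy H (G ⊔ edge x y) := hsat.2 x y hxy hna
  obtain ⟨u, v, huv, hfu, hfv⟩ := exists_adj_map_eq_of_not_hasCopy f hf hsat.1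
  have : Finite α := Finite.of_injective f hf
  have hu : (H.neighborSet u).ncard ≤ G.degree x + 1 :=
    (ncard_neighborSet_le_of_injective f hf u).trans
      (by rw [hfu]; exact ncard_neighborSet_sup_edge_le hxy)
  have hv : (H.neighborSet v).ncard ≤ G.degree y + 1 :=
    (ncard_neighborSet_le_of_injective f hf v).trans
      (by rw [hfv, edge_comm]; exact ncard_neighborSet_sup_edge_le hxy.symm)
  have hc : (H.commonNeighbors u v).ncard ≤ (G.neighborFinset x ∩ G.neighborFinset y).card := by
    have := ncard_commonNeighbors_le_of_injective f hf u v
    rwa [hfu, hfv, commonNeighbors_sup_edge hxy,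
      ncard_commonNeighbors_eq_card_inter (G := G)] at this
  calc graphWt H ≤ edgeWt H u v := Nat.sInf_le ⟨u, v, huv, rfl⟩
    _ ≤ _ := by rw [edgeWt_eq]; omega

section Counting

open Finset

variable {V : Type*} [Fintype V] [DecidableEq V] {G : SimpleGraph V} [DecidableRel G.Adj]

omit [DecidableEq V] in
theorem minDegree_mul_card_le_two_mul_card_edgeFinset :
    G.minDegree * Fintype.card V ≤ 2 * #G.edgeFinset := by
  rw [← sum_degrees_eq_twice_card_edges, mul_comm, ← smul_eq_mul, ← card_univ]
  exact card_nsmul_le_sum _ _ _ fun v _ => G.minDegree_le_degree v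

theorem degree_add_one_add_card_compl_insert_neighborFinset (x : V) :
    G.degree x + 1 + #(insert x (G.neighborFinset x))ᶜ = Fintype.card V := by
  rw [← card_add_card_compl (insert x (G.neighborFinset x)),
    card_insert_of_notMem (by simp), card_neighborFinset_eq_degree]

theorem sum_card_inter_neighborFinset_add_degree_le {x : V} {B : Finset V} (hxB : x ∉ B) :
    ∑ y ∈ B, #(G.neighborFinset x ∩ G.neighborFinset y) + G.degree x
      ≤ ∑ z ∈ G.neighborFinset x, G.degree z := by
  have hswap : ∑ y ∈ B, #(G.neighborFinset x ∩ G.neighborFinset y)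
      = ∑ z ∈ G.neighborFinset x, #(B.bipartiteBelow G.Adj z) := by
    rw [← sum_card_bipartiteAbove_eq_sum_card_bipartiteBelow]
    refine sum_congr rfl fun y _ => congrArg card ?_
    ext z
    simp
  have hle : ∀ z ∈ G.neighborFinset x, #(B.bipartiteBelow G.Adj z) + 1 ≤ G.degree z := by
    intro z hz
    rw [← card_neighborFinset_eq_degree, ← card_insert_of_notMem (a := x) (by simp [hxB])]
    refine card_le_card fun y hy => ?_
    rw [mem_insert, mem_bipartiteBelow] at hy
    rcases hy with rfl | ⟨-, hyz⟩
    · simpa [adj_comm] using hz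
    · simpa [adj_comm] using hyz
  calc _ = ∑ z ∈ G.neighborFinset x, (#(B.bipartiteBelow G.Adj z) + 1) := by
        rw [hswap, sum_add_distrib, sum_const, smul_eq_mul, mul_one, card_neighborFinset_eq_degree]
    _ ≤ _ := sum_le_sum hle

theorem mul_card_compl_add_two_mul_degree_le {w : ℕ} (x : V)
    (hw : ∀ y ∉ insert x (G.neighborFinset x),
      w ≤ G.degree y + #(G.neighborFinset x ∩ G.neighborFinset y) + 1) :
    w * #(insert x (G.neighborFinset x))ᶜ + 2 * G.degree x
      ≤ 2 * #G.edgeFinset + #(insert x (G.neighborFinset x))ᶜ := by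
  set B := (insert x (G.neighborFinset x))ᶜ
  have hsum : w * #B ≤ ∑ y ∈ B, G.degree y
      + ∑ y ∈ B, #(G.neighborFinset x ∩ G.neighborFinset y) + #B := by
    have := card_nsmul_le_sum B _ w fun y hy => hw y (mem_compl.1 hy)
    simpa [sum_add_distrib, mul_comm] using this
  have hcommon :=
    sum_card_inter_neighborFinset_add_degree_le (G := G) (x := x) (B := B) (by simp [B])
  have hdeg : ∑ y ∈ B, G.degree y + ∑ z ∈ G.neighborFinset x, G.degree z + G.degree x
      = 2 * #G.edgeFinset := by
    rw [← sum_degrees_eq_twice_card_edges, ← sum_add_sum_compl (insert x (G.neighborFinset x)),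
      sum_insert (G.notMem_neighborFinset_self x)]
    ring
  omega

end Counting

end SimpleGraph

theorem saturation_bound_of_degree_counts {w d b e n : ℕ} (hw : 2 ≤ w) (hn : d + 1 + b = n)
    (hcount : w * b + 2 * d ≤ 2 * e + b) (hmin : d * n ≤ 2 * e) :
    ((w : ℚ) - 1) / 2 * n - ((w : ℚ) ^ 2 - 4 * w + 5) / 2 ≤ e := by
  subst hn
  have hw' : (2 : ℚ) ≤ w := by exact_mod_cast hw
  have hcount' : (w : ℚ) * b + 2 * d ≤ 2 * e + b := by exact_mod_cast hcount
  have hmin' : (d : ℚ) * (d + 1 + b) ≤ 2 * e := by exact_mod_cast hmin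
  push_cast
  rcases le_or_gt w (d + 1) with hd | hd
  · have hd' : (w : ℚ) ≤ d + 1 := by exact_mod_cast hd
    nlinarith [sq_nonneg ((w : ℚ) - 2)]
  · have hd' : (d : ℚ) + 2 ≤ w := by exact_mod_cast hd
    rcases hw.eq_or_lt with rfl | hw3
    · have hd0 : d = 0 := by omega
      subst hd0
      push_cast at *
      linarith
    · have hw3' : (3 : ℚ) ≤ w := by exact_mod_cast hw3
      nlinarith [mul_nonneg (sub_nonneg.2 hw3') (sub_nonneg.2 hd')]

theorem stmt1_general {α : Type*} (H : SimpleGraph α)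
    (hw : 2 ≤ graphWt H) (n : ℕ) (G : SimpleGraph (Fin n)) (hsat : isSat H G) :
    ((graphWt H : ℚ) - 1) / 2 * n - ((graphWt H : ℚ) ^ 2 - 4 * (graphWt H : ℚ) + 5) / 2
      ≤ (Nat.card G.edgeSet : ℚ) := by
  classical
  rcases n.eq_zero_or_pos with rfl | hn
  · push_cast
    nlinarith [sq_nonneg ((graphWt H : ℚ) - 2), (Nat.card G.edgeSet).cast_nonneg (α := ℚ)]
  have : Nonempty (Fin n) := ⟨⟨0, hn⟩⟩
  obtain ⟨x, hx⟩ := G.exists_minimal_degree_vertex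
  have hcount := G.mul_card_compl_add_two_mul_degree_le (w := graphWt H) x fun y hy => by
    rw [Finset.mem_insert, not_or, mem_neighborFinset] at hy
    have := graphWt_le_of_isSat hsat (Ne.symm hy.1) hy.2
    rwa [max_eq_right (hx ▸ G.minDegree_le_degree y)] at this
  have hcard := G.degree_add_one_add_card_compl_insert_neighborFinset x
  have hmin := G.minDegree_mul_card_le_two_mul_card_edgeFinset
  rw [Fintype.card_fin] at hcard hmin
  rw [Nat.card_eq_fintype_card, ← edgeFinset_card]
  exact saturation_bound_of_degree_counts hw hcard hcount (hx ▸ hmin)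

/-- General lower bound: any `H`-saturated graph `G` on `n` vertices satisfies
`|E(G)| >= ((wt H - 1)/2) * n - (wt(H)^2 - 4 wt(H) + 5)/2`, provided `wt H >= 2`. -/
theorem stmt1 {α : Type*} [Fintype α] (H : SimpleGraph α) (hE : ∃ u v, H.Adj u v)
    (hw : 2 ≤ graphWt H) (n : ℕ) (G : SimpleGraph (Fin n)) (hsat : isSat H G) :
    ((graphWt H : ℚ) - 1) / 2 * n - ((graphWt H : ℚ) ^ 2 - 4 * (graphWt H : ℚ) + 5) / 2
      ≤ (Nat.card G.edgeSet : ℚ) :=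
  stmt1_general H hw n G hsat
end

section
/- If H' is obtained from a graph H by adding a dominating vertex (a new vertex adjacent to all vertices of H), then for all n ≥ |V(H')|, sat(H', n) ≤ (n − 1) + sat(H, n − 1). -/
open SimpleGraph

section Aux

variable {α β γ : Type*}

lemma hasCopy_trans {H : SimpleGraph α} {G : SimpleGraph β} {K : SimpleGraph γ}
    (φ : G →g K) (hφ : Function.Injective φ) (h : hasCopy H G) : hasCopy H K := by
  obtain ⟨f, hf⟩ := h
  exact ⟨φ.comp f, hφ.comp hf⟩

lemma hasCopy_mono {H : SimpleGraph α} {G G' : SimpleGraph β} (h : G ≤ G') :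
    hasCopy H G → hasCopy H G' :=
  hasCopy_trans (SimpleGraph.Hom.ofLE h) (fun _ _ hxy => hxy)

lemma exists_isSat (H : SimpleGraph α) (hE : ∃ u v, H.Adj u v) (k : ℕ) :
    ∃ G : SimpleGraph (Fin k), isSat H G := by
  obtain ⟨G, -, hmax⟩ := Finite.exists_le_maximal (α := SimpleGraph (Fin k))
    (p := fun G => ¬ hasCopy H G) (a := ⊥)
    (by rintro ⟨f, hf⟩; obtain ⟨u, v, huv⟩ := hE; exact absurd (f.map_adj huv) (by simp))
  refine ⟨G, hmax.1, fun x y hxy hadj => ?_⟩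
  by_contra hc
  have hle : G ⊔ SimpleGraph.fromEdgeSet {s(x, y)} ≤ G := hmax.2 hc le_sup_left
  exact hadj (hle (by simp [hxy]))

lemma addDom_none_some (G : SimpleGraph β) (v : β) : (addDom G).Adj none (some v) := by
  rw [addDom, SimpleGraph.fromRel_adj]
  exact ⟨by simp, Or.inl (Or.inl rfl)⟩

lemma addDom_some_some (G : SimpleGraph β) (a b : β) :
    (addDom G).Adj (some a) (some b) ↔ G.Adj a b := by
  rw [addDom, SimpleGraph.fromRel_adj]
  constructor
  · rintro ⟨hne, (h | ⟨u, v, hu, hv, huv⟩) | (h | ⟨u, v, hu, hv, huv⟩)⟩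
    · exact absurd h (by simp)
    · obtain rfl : a = u := Option.some_injective _ hu
      obtain rfl : b = v := Option.some_injective _ hv
      exact huv
    · exact absurd h (by simp)
    · obtain rfl : b = u := Option.some_injective _ hu
      obtain rfl : a = v := Option.some_injective _ hv
      exact huv.symm
  · intro h
    exact ⟨by simpa using h.ne, Or.inl (Or.inr ⟨a, b, rfl, rfl, h⟩)⟩

lemma addDom_none_adj (G : SimpleGraph β) {y : Option β} (hy : y ≠ none) :
    (addDom G).Adj none y := by
  obtain ⟨v, rfl⟩ := Option.ne_none_iff_exists'.mp hy
  exact addDom_none_some G v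

end Aux
section Aux2

variable {α β : Type*}

/-- lifting a copy through addDom -/
lemma hasCopy_addDom {H : SimpleGraph α} {G : SimpleGraph β} (h : hasCopy H G) :
    hasCopy (addDom H) (addDom G) := by
  obtain ⟨f, hf⟩ := h
  refine ⟨⟨Option.map f, ?_⟩, Option.map_injective hf⟩
  rintro (_ | a) (_ | b) hab
  · exact absurd rfl hab.ne
  · exact addDom_none_some G (f b)
  · exact (addDom_none_some G (f a)).symm
  · exact (addDom_some_some G _ _).mpr (f.map_adj ((addDom_some_some H a b).mp hab))

lemma addDom_sup_le (G : SimpleGraph β) (a b : β) :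
    addDom (G ⊔ SimpleGraph.fromEdgeSet {s(a, b)}) ≤
      addDom G ⊔ SimpleGraph.fromEdgeSet {s(some a, some b)} := by
  intro x y h
  rw [addDom, SimpleGraph.fromRel_adj] at h
  obtain ⟨hne, h | h⟩ := h
  · rcases h with rfl | ⟨u, v, rfl, rfl, huv⟩
    · exact Or.inl (addDom_none_adj G (Ne.symm hne))
    · rcases huv with huv | huv
      · exact Or.inl ((addDom_some_some G u v).mpr huv)
      · rw [SimpleGraph.fromEdgeSet_adj] at huv
        refine Or.inr ⟨?_, by simpa using huv.2⟩
        simp only [Set.mem_singleton_iff] at huv ⊢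
        rcases Sym2.eq_iff.mp huv.1 with ⟨rfl, rfl⟩ | ⟨rfl, rfl⟩
        · rfl
        · exact Sym2.eq_swap
  · rcases h with rfl | ⟨u, v, rfl, rfl, huv⟩
    · exact Or.inl (addDom_none_adj G hne).symm
    · rcases huv with huv | huv
      · exact Or.inl ((addDom_some_some G v u).mpr huv.symm)
      · rw [SimpleGraph.fromEdgeSet_adj] at huv
        refine Or.inr ⟨?_, by simpa using huv.2.symm⟩
        simp only [Set.mem_singleton_iff] at huv ⊢
        rcases Sym2.eq_iff.mp huv.1 with ⟨rfl, rfl⟩ | ⟨rfl, rfl⟩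
        · exact Sym2.eq_swap
        · rfl

/-- addDom preserves freeness -/
lemma addDom_free {H : SimpleGraph α} {G : SimpleGraph β} (hG : ¬ hasCopy H G) :
    ¬ hasCopy (addDom H) (addDom G) := by
  rintro ⟨f, hf⟩
  apply hG
  rcases hd : f none with _ | w
  · -- f none = none
    have key : ∀ u : α, ∃ z, f (some u) = some z := by
      intro u
      rcases hz : f (some u) with _ | z
      · exact absurd (hf (hz.trans hd.symm)) (by simp)
      · exact ⟨z, rfl⟩
    choose g hg using key
    refine ⟨⟨g, fun {u v} huv => ?_⟩, fun u v huv => Option.some_injective _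
      (hf (by rw [hg u, hg v]; exact congrArg some huv))⟩
    have := f.map_adj ((addDom_some_some H u v).mpr huv)
    rwa [hg, hg, addDom_some_some] at this
  · by_cases ha : ∃ a, f (some a) = none
    · obtain ⟨a, haa⟩ := ha
      have key : ∀ u : α, ∃ z, (u = a ∧ z = w) ∨ (u ≠ a ∧ f (some u) = some z) := by
        intro u
        by_cases h : u = a
        · exact ⟨w, Or.inl ⟨h, rfl⟩⟩
        · rcases hz : f (some u) with _ | z
          · exact absurd (Option.some_injective _ (hf (hz.trans haa.symm))) h
          · exact ⟨z, Or.inr ⟨h, rfl⟩⟩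
      choose g hg using key
      have hga : g a = w := by rcases hg a with ⟨-, h⟩ | ⟨h, -⟩ <;> [exact h; exact absurd rfl h]
      have hgo : ∀ u, u ≠ a → f (some u) = some (g u) := by
        intro u hu
        rcases hg u with ⟨h, -⟩ | ⟨-, h⟩
        · exact absurd h hu
        · exact h
      have hwadj : ∀ u, u ≠ a → G.Adj w (g u) := by
        intro u hu
        have := f.map_adj (addDom_none_some H u)
        rwa [hd, hgo u hu, addDom_some_some] at this
      refine ⟨⟨g, fun {u v} huv => ?_⟩, fun u v huv => ?_⟩
      · by_cases hu : u = a
        · subst hu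
          rw [hga]
          exact hwadj v (fun h => huv.ne h.symm)
        · by_cases hv : v = a
          · subst hv
            rw [hga]
            exact (hwadj u hu).symm
          · have := f.map_adj ((addDom_some_some H u v).mpr huv)
            rwa [hgo u hu, hgo v hv, addDom_some_some] at this
      · have huv' : g u = g v := huv
        by_cases hu : u = a <;> by_cases hv : v = a
        · exact hu.trans hv.symm
        · exfalso
          subst hu
          have h1 : f (some v) = f none := by
            rw [hgo v hv, hd, ← hga]
            exact congrArg some huv'.symm
          exact Option.some_ne_none v (hf h1)
        · exfalso
          subst hv
          have h1 : f (some u) = f none := by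
            rw [hgo u hu, hd, ← hga]
            exact congrArg some huv'
          exact Option.some_ne_none u (hf h1)
        · refine Option.some_injective _ (hf ?_)
          rw [hgo u hu, hgo v hv]
          exact congrArg some huv'
    · push_neg at ha
      have key : ∀ u : α, ∃ z, f (some u) = some z := by
        intro u
        rcases hz : f (some u) with _ | z
        · exact absurd hz (ha u)
        · exact ⟨z, rfl⟩
      choose g hg using key
      refine ⟨⟨g, fun {u v} huv => ?_⟩, fun u v huv => Option.some_injective _
        (hf (by rw [hg u, hg v]; exact congrArg some huv))⟩
      have := f.map_adj ((addDom_some_some H u v).mpr huv)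
      rwa [hg, hg, addDom_some_some] at this

end Aux2
section Aux3

variable {β : Type*}

lemma mem_map_some (G : SimpleGraph β) {e : Sym2 β} (he : e ∈ G.edgeSet) :
    Sym2.map some e ∈ (addDom G).edgeSet := by
  induction e with
  | _ a b =>
    rw [Sym2.map_pair_eq, SimpleGraph.mem_edgeSet] at *
    exact (addDom_some_some G a b).mpr he

lemma card_edgeSet_addDom [Fintype β] (G : SimpleGraph β) :
    Nat.card (addDom G).edgeSet = Fintype.card β + Nat.card G.edgeSet := by
  classical
  let F : β ⊕ G.edgeSet → (addDom G).edgeSet :=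
    Sum.elim (fun v => ⟨s(none, some v), (addDom_none_some G v)⟩)
      (fun e => ⟨Sym2.map some e.1, mem_map_some G e.2⟩)
  have hF : Function.Bijective F := by
    constructor
    · rintro (v | ⟨e, he⟩) (w | ⟨e', he'⟩) h
      · have h' : s((none : Option β), some v) = s(none, some w) := congrArg Subtype.val h
        rcases Sym2.eq_iff.mp h' with ⟨-, h2⟩ | ⟨h1, -⟩
        · rw [Option.some_injective _ h2]
        · exact absurd h1.symm (Option.some_ne_none w)
      · exfalso
        have h' : s((none : Option β), some v) = Sym2.map some e' := congrArg Subtype.val h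
        have : (none : Option β) ∈ Sym2.map some e' := h' ▸ Sym2.mem_mk_left none (some v)
        rw [Sym2.mem_map] at this
        obtain ⟨b, -, hb⟩ := this
        exact Option.some_ne_none b hb
      · exfalso
        have h' : Sym2.map some e = s((none : Option β), some w) := congrArg Subtype.val h
        have : (none : Option β) ∈ Sym2.map some e := h'.symm ▸ Sym2.mem_mk_left none (some w)
        rw [Sym2.mem_map] at this
        obtain ⟨b, -, hb⟩ := this
        exact Option.some_ne_none b hb
      · have h' : Sym2.map some e = Sym2.map some e' := congrArg Subtype.val h
        have := Sym2.map.injective (Option.some_injective β) h'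
        subst this
        rfl
    · rintro ⟨e, he⟩
      revert he
      refine Sym2.ind (fun x y => ?_) e
      intro he
      rw [SimpleGraph.mem_edgeSet] at he
      rcases x with _ | a <;> rcases y with _ | b
      · exact absurd rfl he.ne
      · exact ⟨Sum.inl b, Subtype.ext rfl⟩
      · exact ⟨Sum.inl a, Subtype.ext Sym2.eq_swap⟩
      · exact ⟨Sum.inr ⟨s(a, b), (addDom_some_some G a b).mp he⟩,
          Subtype.ext (Sym2.map_pair_eq some a b)⟩
  calc Nat.card (addDom G).edgeSet = Nat.card (β ⊕ G.edgeSet) :=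
        (Nat.card_congr (Equiv.ofBijective F hF)).symm
    _ = Fintype.card β + Nat.card G.edgeSet := by
        rw [Nat.card_sum, Nat.card_eq_fintype_card]

end Aux3

/-- If `H'` is obtained from `H` by adding a dominating vertex, then
`sat(H', n) <= (n - 1) + sat(H, n - 1)` for all `n >= |V(H')|`. -/
theorem stmt3 {α : Type*} [Fintype α] (H : SimpleGraph α) (hE : ∃ u v, H.Adj u v)
    (n : ℕ) (hn : Fintype.card α + 1 ≤ n) :
    satNum (addDom H) n ≤ (n - 1) + satNum H (n - 1) := by
  classical
  set k := n - 1 with hk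
  have hn1 : 1 ≤ n := le_trans (Nat.le_add_left _ _) hn
  have hkn : k + 1 = n := Nat.succ_pred_eq_of_pos hn1
  have hset : {m | ∃ G : SimpleGraph (Fin k), isSat H G ∧ Nat.card G.edgeSet = m}.Nonempty := by
    obtain ⟨G, hG⟩ := exists_isSat H hE k
    exact ⟨_, G, hG, rfl⟩
  obtain ⟨G, hGsat, hGcard⟩ := Nat.sInf_mem hset
  let e : Fin n ≃ Option (Fin k) := (finCongr hkn.symm).trans (finSuccEquiv k)
  let G₂ : SimpleGraph (Fin n) := (addDom G).comap e.toEmbedding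
  have iso : G₂ ≃g addDom G := SimpleGraph.Iso.comap e (addDom G)
  have hcomap : ∀ x y : Fin n, G₂.Adj x y ↔ (addDom G).Adj (e x) (e y) := fun x y => Iff.rfl
  apply Nat.sInf_le
  refine ⟨G₂, ⟨?_, ?_⟩, ?_⟩
  · intro hc
    exact addDom_free hGsat.1 (hasCopy_trans iso.toHom (fun a b h => iso.injective h) hc)
  · intro x y hxy hadj
    have hxy' : e x ≠ e y := fun h => hxy (e.injective h)
    have hadj' : ¬ (addDom G).Adj (e x) (e y) := fun h => hadj ((hcomap x y).mpr h)
    rcases hex : e x with _ | a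
    · exact absurd (hex ▸ addDom_none_adj G (fun h => hxy' (by rw [hex, h]))) hadj'
    · rcases hey : e y with _ | b
      · exact absurd (hey ▸ (addDom_none_adj G (fun h => hxy' (by rw [hex, hey, h]))).symm)
          (by rw [hex] at hadj'; exact hadj')
      · have hab : a ≠ b := by
          rintro rfl
          exact hxy' (hex.trans hey.symm)
        have hnadj : ¬ G.Adj a b := by
          intro h
          rw [hex, hey] at hadj'
          exact hadj' ((addDom_some_some G a b).mpr h)
        have hcopy := hasCopy_addDom (hGsat.2 a b hab hnadj)
        have hcopy2 : hasCopy (addDom H)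
            (addDom G ⊔ SimpleGraph.fromEdgeSet {s(some a, some b)}) :=
          hasCopy_mono (addDom_sup_le G a b) hcopy
        refine hasCopy_trans (G := addDom G ⊔ SimpleGraph.fromEdgeSet {s(some a, some b)})
          ⟨⇑e.symm, ?_⟩ e.symm.injective hcopy2
        rintro u v (huv | huv)
        · left
          show (addDom G).Adj (e (e.symm u)) (e (e.symm v))
          rwa [e.apply_symm_apply, e.apply_symm_apply]
        · right
          rw [SimpleGraph.fromEdgeSet_adj] at huv ⊢
          refine ⟨?_, fun h => huv.2 (e.symm.injective h)⟩
          simp only [Set.mem_singleton_iff] at huv ⊢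
          rcases Sym2.eq_iff.mp huv.1 with ⟨h1, h2⟩ | ⟨h1, h2⟩
          · rw [h1, ← hex, h2, ← hey, e.symm_apply_apply, e.symm_apply_apply]
          · rw [h1, ← hey, h2, ← hex, e.symm_apply_apply, e.symm_apply_apply]
            exact Sym2.eq_swap
  · calc Nat.card G₂.edgeSet = Nat.card (addDom G).edgeSet := Nat.card_congr iso.mapEdgeSet
      _ = Fintype.card (Fin k) + Nat.card G.edgeSet := card_edgeSet_addDom G
      _ = (n - 1) + satNum H (n - 1) := by rw [Fintype.card_fin, hGcard]; rfl
end

section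
/- Let G be an H-saturated graph on n − 1 vertices, and let G' be obtained from G by adding a new vertex x* adjacent to all vertices of G. If H' is obtained from H by adding a dominating vertex, then G' is H'-saturated. -/
open SimpleGraph

lemma addDom_adj_some_some {α : Type*} (H : SimpleGraph α) (a b : α) :
    (addDom H).Adj (some a) (some b) ↔ H.Adj a b := by
  simp only [addDom, fromRel_adj]
  constructor
  · rintro ⟨hne, (h | ⟨u, v, hu, hv, huv⟩) | (h | ⟨u, v, hu, hv, huv⟩)⟩
    · simp at h
    · simp_all
    · simp at h
    · simp_all; exact huv.symm
  · intro h
    exact ⟨by simp [h.ne], Or.inl (Or.inr ⟨a, b, rfl, rfl, h⟩)⟩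

lemma addDom_adj_none_some {α : Type*} (H : SimpleGraph α) (a : α) :
    (addDom H).Adj none (some a) := by
  simp only [addDom, fromRel_adj]
  exact ⟨by simp, Or.inl (Or.inl (by simp))⟩

lemma no_copy {α β : Type*} (H : SimpleGraph α) (G : SimpleGraph β)
    (h : ¬ hasCopy H G) : ¬ hasCopy (addDom H) (addDom G) := by
  rintro ⟨f, hf⟩
  rcases isEmpty_or_nonempty α with hα | hα
  · exact h ⟨⟨isEmptyElim, fun {a b} h' => isEmptyElim a⟩, fun a => isEmptyElim a⟩
  · apply h
    by_cases hcase : ∃ u₀ : α, f (some u₀) = none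
    · obtain ⟨u₀, hu₀⟩ := hcase
      have hfn : f none ≠ none := fun h' => by
        have := hf (h'.trans hu₀.symm); simp at this
      obtain ⟨w, hw⟩ := Option.ne_none_iff_exists'.mp hfn
      set g : α → β := fun v => (f (some v)).getD w with hg
      have hsome : ∀ v : α, v ≠ u₀ → f (some v) = some (g v) := by
        intro v hv
        have : f (some v) ≠ none := fun h' => by
          have := hf (h'.trans hu₀.symm); simp at this; exact hv this
        obtain ⟨x, hx⟩ := Option.ne_none_iff_exists'.mp this
        simp [hg, hx]
      have hgu₀ : g u₀ = w := by simp [hg, hu₀]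
      refine ⟨⟨g, ?_⟩, ?_⟩
      · intro u v huv
        rcases eq_or_ne u u₀ with rfl | hu
        · have hvne : v ≠ u := fun h' => (H.irrefl (h' ▸ huv))
          have h1 : (addDom G).Adj (f none) (f (some v)) :=
            f.map_adj (addDom_adj_none_some H v)
          rw [hw, hsome v hvne] at h1
          rw [hgu₀]
          exact (addDom_adj_some_some G w (g v)).mp h1
        · rcases eq_or_ne v u₀ with rfl | hv
          · have h1 : (addDom G).Adj (f none) (f (some u)) :=
              f.map_adj (addDom_adj_none_some H u)
            rw [hw, hsome u hu] at h1
            rw [hgu₀]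
            exact ((addDom_adj_some_some G w (g u)).mp h1).symm
          · have h1 : (addDom G).Adj (f (some u)) (f (some v)) :=
              f.map_adj ((addDom_adj_some_some H u v).mpr huv)
            rw [hsome u hu, hsome v hv] at h1
            exact (addDom_adj_some_some G (g u) (g v)).mp h1
      · intro u v huv
        have huv' : g u = g v := huv
        rcases eq_or_ne u u₀ with rfl | hu
        · rcases eq_or_ne v u with rfl | hv
          · rfl
          · exfalso
            have : f none = f (some v) := by rw [hw, hsome v hv, ← huv', hgu₀]
            exact Option.some_ne_none v (hf this).symm
        · rcases eq_or_ne v u₀ with rfl | hv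
          · exfalso
            have : f none = f (some u) := by rw [hw, hsome u hu, huv', hgu₀]
            exact Option.some_ne_none u (hf this).symm
          · have : f (some u) = f (some v) := by rw [hsome u hu, hsome v hv, huv']
            exact Option.some_injective α (hf this)
    · push_neg at hcase
      have hd : Nonempty β := by
        rcases Option.ne_none_iff_exists'.mp (hcase (Classical.arbitrary α)) with ⟨x, _⟩
        exact ⟨x⟩
      obtain ⟨d⟩ := hd
      set g : α → β := fun v => (f (some v)).getD d with hg
      have hsome : ∀ v : α, f (some v) = some (g v) := by
        intro v
        obtain ⟨x, hx⟩ := Option.ne_none_iff_exists'.mp (hcase v)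
        simp [hg, hx]
      refine ⟨⟨g, ?_⟩, ?_⟩
      · intro u v huv
        have h1 : (addDom G).Adj (f (some u)) (f (some v)) :=
          f.map_adj ((addDom_adj_some_some H u v).mpr huv)
        rw [hsome u, hsome v] at h1
        exact (addDom_adj_some_some G (g u) (g v)).mp h1
      · intro u v huv
        have huv' : g u = g v := huv
        have : f (some u) = f (some v) := by rw [hsome u, hsome v, huv']
        exact Option.some_injective α (hf this)

/-- If `G` is `H`-saturated and `G'` is obtained from `G` by adding a dominating vertex,
then `G'` is saturated with respect to `H' = H` plus a dominating vertex. -/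
theorem stmt4 {α β : Type*} [Fintype α] [Fintype β] (H : SimpleGraph α) (G : SimpleGraph β)
    (hsat : isSat H G) : isSat (addDom H) (addDom G) := by
  obtain ⟨hfree, hsat2⟩ := hsat
  constructor
  · exact no_copy H G hfree
  · intro x y hxy hadj
    match x, y with
    | none, none => exact absurd rfl hxy
    | none, some b => exact absurd (addDom_adj_none_some G b) hadj
    | some a, none => exact absurd ((addDom_adj_none_some G a).symm) hadj
    | some a, some b =>
      have hab : a ≠ b := fun h => hxy (by rw [h])
      have hnadj : ¬ G.Adj a b := fun h => hadj ((addDom_adj_some_some G a b).mpr h)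
      obtain ⟨f, hf⟩ := hsat2 a b hab hnadj
      refine ⟨⟨Option.map f, ?_⟩, Option.map_injective hf⟩
      intro u v huv
      match u, v with
      | none, none => exact ((addDom H).irrefl huv).elim
      | none, some c =>
          exact Or.inl (addDom_adj_none_some G (f c))
      | some c, none =>
          exact Or.inl ((addDom_adj_none_some G (f c)).symm)
      | some c, some d =>
          have hcd : H.Adj c d := (addDom_adj_some_some H c d).mp huv
          rcases f.map_adj hcd with h1 | h1
          · exact Or.inl ((addDom_adj_some_some G (f c) (f d)).mpr h1)
          · rw [fromEdgeSet_adj] at h1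
            refine Or.inr ?_
            rw [fromEdgeSet_adj]
            constructor
            · simp only [Set.mem_singleton_iff, Option.map_some] at h1 ⊢
              rcases Sym2.eq_iff.mp h1.1 with ⟨h2, h3⟩ | ⟨h2, h3⟩
              · rw [h2, h3]
              · rw [h2, h3]; exact Sym2.eq_swap
            · simp only [ne_eq, Option.map_some, Option.some.injEq]
              exact h1.2
end

section
/- If G is H-saturated, G contains no copy of H' where H' = H plus a dominating vertex, and G' = G joined with a new universal vertex x*, then G' contains no subgraph isomorphic to H'. -/
open SimpleGraph

/-- If `G` is `H`-saturated and `H'`-free, where `H' = H` plus a dominating vertex, then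
`G' = G` plus a universal vertex contains no copy of `H'`. -/
theorem stmt5 {α β : Type*} [Fintype α] [Fintype β] (H : SimpleGraph α) (G : SimpleGraph β)
    (hsat : isSat H G) (hfree : ¬ hasCopy (addDom H) G) :
    ¬ hasCopy (addDom H) (addDom G) := by
  rintro ⟨f, hf⟩
  apply hsat.1
  have hdom : ∀ u : α, (addDom H).Adj none (some u) := by
    intro u; simp [addDom, SimpleGraph.fromRel_adj]
  have hsome : ∀ u v : α, H.Adj u v → (addDom H).Adj (some u) (some v) := by
    intro u v huv
    simp only [addDom, SimpleGraph.fromRel_adj]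
    exact ⟨by simpa using huv.ne, Or.inl (Or.inr ⟨u, v, rfl, rfl, huv⟩)⟩
  have hsome' : ∀ a b : β, (addDom G).Adj (some a) (some b) → G.Adj a b := by
    intro a b h
    simp only [addDom, SimpleGraph.fromRel_adj] at h
    rcases h with ⟨-, h | h⟩ <;>
      rcases h with h | ⟨x, y, hx, hy, hxy⟩ <;>
      first
        | exact absurd h (by simp)
        | (cases hx; cases hy; first | exact hxy | exact hxy.symm)
  have key : ∀ u : α, ∃ b : β,
      f (some u) = some b ∨ (f (some u) = none ∧ f none = some b) := by
    intro u
    cases hfu : f (some u) with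
    | some b => exact ⟨b, Or.inl rfl⟩
    | none =>
      cases hfn : f none with
      | none => exact absurd (hf (hfu.trans hfn.symm)) (by simp)
      | some b => exact ⟨b, Or.inr ⟨rfl, rfl⟩⟩
  choose g hg using key
  refine ⟨⟨g, ?_⟩, ?_⟩
  · intro u v huv
    have hadj : (addDom G).Adj (f (some u)) (f (some v)) := f.map_adj (hsome u v huv)
    rcases hg u with h1 | ⟨h1, h1'⟩ <;> rcases hg v with h2 | ⟨h2, h2'⟩
    · rw [h1, h2] at hadj
      exact hsome' _ _ hadj
    · have := f.map_adj (hdom u)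
      rw [h2', h1] at this
      exact (hsome' _ _ this).symm
    · have := f.map_adj (hdom v)
      rw [h1', h2] at this
      exact hsome' _ _ this
    · exact absurd (Option.some.inj (hf (h1.trans h2.symm))) huv.ne
  · intro u v h
    replace h : g u = g v := h
    rcases hg u with h1 | ⟨h1, h1'⟩ <;> rcases hg v with h2 | ⟨h2, h2'⟩
    · exact Option.some.inj (hf (show f (some u) = f (some v) by rw [h1, h2, h]))
    · exact absurd (hf (show f (some u) = f none by rw [h1, h2', h])) (by simp)
    · exact absurd (hf (show f none = f (some v) by rw [h1', h2, ← h])) (by simp)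
    · exact Option.some.inj (hf (h1.trans h2.symm))
end

section
/- Let H be a k-vertex graph with an isolated vertex u, and let H' be obtained from H by adding a dominating vertex v*. If H has no edges, or wt(H) > k − 2, then wt(H') = k, and the edges of minimum weight in H' are exactly the edges joining v* to isolated vertices of H. -/
open SimpleGraph

section Aux

variable {α : Type*} [Fintype α] (H : SimpleGraph α)

lemma addDom_adj_none (a : α) : (addDom H).Adj none (some a) := by
  unfold addDom
  rw [SimpleGraph.fromRel_adj]
  exact ⟨by simp, Or.inl (Or.inl rfl)⟩

lemma addDom_adj_some (a b : α) : (addDom H).Adj (some a) (some b) ↔ H.Adj a b := by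
  unfold addDom
  rw [SimpleGraph.fromRel_adj]
  constructor
  · rintro ⟨hne, h⟩
    rcases h with (h | ⟨x, y, h1, h2, h3⟩) | (h | ⟨x, y, h1, h2, h3⟩)
    · exact absurd h (by simp)
    · injection h1 with h1; injection h2 with h2; subst h1; subst h2; exact h3
    · exact absurd h (by simp)
    · injection h1 with h1; injection h2 with h2; subst h1; subst h2; exact h3.symm
  · intro h
    exact ⟨fun hc => h.ne (Option.some_injective α hc), Or.inl (Or.inr ⟨a, b, rfl, rfl, h⟩)⟩

lemma nbhd_none : (addDom H).neighborSet none = Set.range some := by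
  ext y
  cases y with
  | none => simp [SimpleGraph.mem_neighborSet]
  | some a => simp [SimpleGraph.mem_neighborSet, addDom_adj_none]

lemma nbhd_some (a : α) :
    (addDom H).neighborSet (some a) = insert none (some '' H.neighborSet a) := by
  ext y
  cases y with
  | none => simp [SimpleGraph.mem_neighborSet, ((addDom_adj_none H a).symm : _)]
  | some b =>
      simp [SimpleGraph.mem_neighborSet, addDom_adj_some, Option.some_injective α |>.eq_iff]

lemma ncard_range_some : (Set.range (some : α → Option α)).ncard = Fintype.card α := by
  rw [← Set.image_univ, Set.ncard_image_of_injective _ (Option.some_injective α),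
    Set.ncard_univ, Nat.card_eq_fintype_card]

lemma ncard_insert_some (S : Set α) :
    (insert (none : Option α) (some '' S)).ncard = S.ncard + 1 := by
  rw [Set.ncard_insert_of_notMem (by simp) (Set.toFinite _),
    Set.ncard_image_of_injective _ (Option.some_injective α)]

lemma deg_le (a : α) : (H.neighborSet a).ncard + 1 ≤ Fintype.card α := by
  have h1 : (insert a (H.neighborSet a)).ncard = (H.neighborSet a).ncard + 1 :=
    Set.ncard_insert_of_notMem (by simp) (Set.toFinite _)
  have h2 : (insert a (H.neighborSet a)).ncard ≤ (Set.univ : Set α).ncard :=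
    Set.ncard_le_ncard (Set.subset_univ _) Set.finite_univ
  rw [Set.ncard_univ, Nat.card_eq_fintype_card] at h2
  omega

lemma set_inter1 (S : Set α) :
    insert (none : Option α) (some '' S) ∩ Set.range some = some '' S := by
  ext y; cases y <;> simp

lemma set_diff1 (S : Set α) :
    Set.range some \ insert (none : Option α) (some '' S) = some '' Sᶜ := by
  ext y; cases y <;> simp

lemma set_inter2 (S T : Set α) :
    insert (none : Option α) (some '' S) ∩ insert none (some '' T)
      = insert none (some '' (S ∩ T)) := by
  ext y; cases y <;> simp

lemma set_diff2 (S T : Set α) :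
    insert (none : Option α) (some '' S) \ insert none (some '' T) = some '' (S \ T) := by
  ext y; cases y <;> simp [Option.some_injective α |>.eq_iff]

lemma ncard_compl (S : Set α) : Sᶜ.ncard = Fintype.card α - S.ncard := by
  have := Set.ncard_add_ncard_compl S (Set.toFinite _) (Set.toFinite _)
  rw [Nat.card_eq_fintype_card] at this
  omega

lemma edgeWt_sn (a : α) :
    edgeWt (addDom H) (some a) none = Fintype.card α + (H.neighborSet a).ncard := by
  have hd := deg_le H a
  unfold edgeWt
  rw [nbhd_none, nbhd_some, ncard_insert_some, ncard_range_some, set_inter1, set_diff1]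
  simp only [Set.ncard_image_of_injective _ (Option.some_injective α)]
  rw [ncard_compl, if_pos hd]
  omega

lemma edgeWt_ns (a : α) :
    edgeWt (addDom H) none (some a) = Fintype.card α + (H.neighborSet a).ncard := by
  have hd := deg_le H a
  unfold edgeWt
  rw [nbhd_none, nbhd_some, ncard_insert_some, ncard_range_some,
    Set.inter_comm, set_inter1, set_diff1]
  simp only [Set.ncard_image_of_injective _ (Option.some_injective α)]
  rw [ncard_compl]
  split
  · -- card α ≤ d a + 1, so d a + 1 = card α
    rename_i h
    have : (insert (none : Option α) (some '' H.neighborSet a) \ Set.range some) = {none} := by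
      ext y; cases y <;> simp
    rw [this, Set.ncard_singleton]
    omega
  · omega

lemma edgeWt_ss (a b : α) :
    edgeWt (addDom H) (some a) (some b) = edgeWt H a b + 2 := by
  unfold edgeWt
  rw [nbhd_some, nbhd_some, ncard_insert_some, ncard_insert_some, set_inter2, set_diff2,
    ncard_insert_some, Set.ncard_image_of_injective _ (Option.some_injective α)]
  have h2 : (insert (none : Option α) (some '' H.neighborSet a)
      \ insert none (some '' H.neighborSet b)).ncard
      = (H.neighborSet a \ H.neighborSet b).ncard := by
    rw [set_diff2, Set.ncard_image_of_injective _ (Option.some_injective α)]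
  by_cases h : (H.neighborSet a).ncard ≤ (H.neighborSet b).ncard
  · rw [if_pos (by omega), if_pos h]; omega
  · rw [if_neg (by omega), if_neg h, h2]; omega

end Aux

/-- If the `k`-vertex graph `H` has an isolated vertex and either no edges or
`wt(H) > k - 2`, then `wt(H') = k` where `H' = H` plus a dominating vertex, and the
minimum-weight edges of `H'` are exactly the edges joining the dominating vertex to
isolated vertices of `H`. -/
theorem stmt8 {α : Type*} [Fintype α] (H : SimpleGraph α) (k : ℕ) (hk : Fintype.card α = k)
    (u : α) (hu : ∀ w, ¬ H.Adj u w)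
    (hbig : (∀ a b, ¬ H.Adj a b) ∨ k - 2 < graphWt H) :
    graphWt (addDom H) = k ∧
      ∀ x y : Option α, (addDom H).Adj x y →
        (edgeWt (addDom H) x y = k ↔
          (x = none ∧ ∃ w, y = some w ∧ ∀ z, ¬ H.Adj w z) ∨
          (y = none ∧ ∃ w, x = some w ∧ ∀ z, ¬ H.Adj w z)) := by
  subst hk
  have hNu : H.neighborSet u = ∅ := by
    ext z; simp [SimpleGraph.mem_neighborSet, hu]
  have hdu : (H.neighborSet u).ncard = 0 := by rw [hNu]; simp
  have hmem : Fintype.card α ∈ {w | ∃ x y, (addDom H).Adj x y ∧ w = edgeWt (addDom H) x y} := by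
    exact ⟨none, some u, addDom_adj_none H u, by rw [edgeWt_ns, hdu]; omega⟩
  -- every internal edge has big weight
  have hint : ∀ a b, H.Adj a b → Fintype.card α + 1 ≤ edgeWt (addDom H) (some a) (some b) := by
    intro a b hab
    rcases hbig with hb | hb
    · exact absurd hab (hb a b)
    · have h1 : graphWt H ≤ edgeWt H a b := Nat.sInf_le ⟨a, b, hab, rfl⟩
      have h2 : a ≠ u := fun h => hu b (h ▸ hab)
      have h3 : b ≠ u := fun h => hu a (h ▸ hab.symm)
      have h4 : 2 ≤ Fintype.card α := by
        classical
        have : ({a, u} : Finset α).card ≤ Fintype.card α := Finset.card_le_univ _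
        rwa [Finset.card_pair h2] at this
      rw [edgeWt_ss]
      omega
  have hlb : ∀ w ∈ {w | ∃ x y, (addDom H).Adj x y ∧ w = edgeWt (addDom H) x y},
      Fintype.card α ≤ w := by
    rintro w ⟨x, y, hadj, rfl⟩
    match x, y with
    | none, none => exact absurd hadj (addDom H).irrefl
    | none, some a => rw [edgeWt_ns]; omega
    | some a, none => rw [edgeWt_sn]; omega
    | some a, some b =>
        have hab := (addDom_adj_some H a b).mp hadj
        have := hint a b hab
        omega
  constructor
  · exact le_antisymm (Nat.sInf_le hmem) (le_csInf ⟨_, hmem⟩ hlb)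
  · intro x y hadj
    match x, y with
    | none, none => exact absurd hadj (addDom H).irrefl
    | none, some a =>
        rw [edgeWt_ns]
        constructor
        · intro h
          have hda : (H.neighborSet a).ncard = 0 := by omega
          have hNa : H.neighborSet a = ∅ := (Set.ncard_eq_zero (Set.toFinite _)).mp hda
          refine Or.inl ⟨rfl, a, rfl, fun z hz => ?_⟩
          have : z ∈ H.neighborSet a := hz
          rw [hNa] at this; exact this
        · rintro (⟨-, w, hw, hiso⟩ | ⟨h, -⟩)
          · have hwa : w = a := by injection hw with hw; exact hw.symm
            subst hwa
            have hNa : H.neighborSet w = ∅ := by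
              ext z; simp [SimpleGraph.mem_neighborSet, hiso]
            rw [hNa]; simp
          · exact absurd h (by simp)
    | some a, none =>
        rw [edgeWt_sn]
        constructor
        · intro h
          have hda : (H.neighborSet a).ncard = 0 := by omega
          have hNa : H.neighborSet a = ∅ := (Set.ncard_eq_zero (Set.toFinite _)).mp hda
          refine Or.inr ⟨rfl, a, rfl, fun z hz => ?_⟩
          have : z ∈ H.neighborSet a := hz
          rw [hNa] at this; exact this
        · rintro (⟨h, -⟩ | ⟨-, w, hw, hiso⟩)
          · exact absurd h (by simp)
          · have hwa : w = a := by injection hw with hw; exact hw.symm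
            subst hwa
            have hNa : H.neighborSet w = ∅ := by
              ext z; simp [SimpleGraph.mem_neighborSet, hiso]
            rw [hNa]; simp
    | some a, some b =>
        have hab := (addDom_adj_some H a b).mp hadj
        have := hint a b hab
        constructor
        · intro h; omega
        · rintro (⟨h, -⟩ | ⟨h, -⟩) <;> exact absurd h (by simp)
end

section
/- For the star K_{1,k} (one center adjacent to k leaves), the limit lim_{n→∞} sat(K_{1,k}, n)/n exists and equals (k−1)/2. -/
open SimpleGraph

/-!
A graph is `K_{1,k}`-saturated exactly when its maximum degree is below `k` and every non-edge
has an endpoint of degree `k - 1`. Hence `2 e(G) ≤ n (k - 1)`; conversely, the vertices of degree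
below `k - 1` are pairwise adjacent, so they form a clique and there are at most `k - 1` of them,
which gives `n (k - 1) ≤ 2 e(G) + (k - 1)²`. Saturated graphs exist (take a maximal
`K_{1,k}`-free graph), so `sat(K_{1,k}, n) = (k - 1) n / 2 + O(k²)`.
-/

open SimpleGraph Filter Topology

lemma addDom_bot_adj {ι : Type*} {x y : Option ι} :
    (addDom (⊥ : SimpleGraph ι)).Adj x y ↔ x ≠ y ∧ (x = none ∨ y = none) := by
  simp [addDom, fromRel_adj]

theorem hasCopy_addDom_bot_iff {V ι : Type*} [Finite V] [Finite ι] (G : SimpleGraph V) :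
    hasCopy (addDom (⊥ : SimpleGraph ι)) G ↔ ∃ v, Nat.card ι ≤ (G.neighborSet v).ncard := by
  constructor
  · rintro ⟨f, hf⟩
    have hleaf (i : ι) : f (some i) ∈ G.neighborSet (f none) :=
      f.map_rel (addDom_bot_adj.2 ⟨by simp, .inl rfl⟩)
    exact ⟨f none, Nat.card_le_card_of_injective (fun i ↦ ⟨f (some i), hleaf i⟩)
      fun i j hij ↦ Option.some_injective _ (hf (congrArg Subtype.val hij))⟩
  · rintro ⟨v, hv⟩
    have := Fintype.ofFinite ι
    have := Fintype.ofFinite (G.neighborSet v)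
    rw [← Nat.card_coe_set_eq, Nat.card_eq_fintype_card, Nat.card_eq_fintype_card] at hv
    obtain ⟨g⟩ := Function.Embedding.nonempty_of_card_le hv
    have hadj (i : ι) : G.Adj v (g i) := (g i).2
    refine ⟨⟨fun x ↦ x.elim v fun i ↦ g i, ?_⟩, ?_⟩
    · rintro (_ | i) (_ | j) h <;> simp only [addDom_bot_adj] at h
      · simp at h
      · exact hadj j
      · exact (hadj i).symm
      · simp at h
    · rintro (_ | i) (_ | j) h <;> simp only [Option.elim] at h
      · rfl
      · exact absurd h (hadj j).ne
      · exact absurd h (hadj i).ne'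
      · exact congrArg some (g.injective (Subtype.ext h))

lemma neighborSet_sup_edge_of_ne {V : Type*} (G : SimpleGraph V) {x y v : V} (hx : v ≠ x)
    (hy : v ≠ y) : (G ⊔ edge x y).neighborSet v = G.neighborSet v := by
  ext w
  simp [edge_adj, hx, hy]

lemma ncard_neighborSet_sup_edge_le {V : Type*} [Finite V] (G : SimpleGraph V) (x y : V) :
    ((G ⊔ edge x y).neighborSet x).ncard ≤ (G.neighborSet x).ncard + 1 := by
  refine (Set.ncard_le_ncard (t := insert y (G.neighborSet x)) ?_).trans
    (Set.ncard_insert_le _ _)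
  intro w
  simp only [mem_neighborSet, sup_adj, edge_adj, Set.mem_insert_iff]
  grind

lemma SimpleGraph.IsClique.ncard_le_ncard_neighborSet_add_one {V : Type*} [Finite V]
    {G : SimpleGraph V} {S : Set V} (hS : G.IsClique S) {v : V} (hv : v ∈ S) :
    S.ncard ≤ (G.neighborSet v).ncard + 1 := by
  rw [← Set.ncard_sdiff_singleton_add_one hv]
  gcongr
  · exact Set.toFinite _
  · intro w ⟨hw, hwv⟩
    exact hS hv hw (Ne.symm hwv)

lemma two_mul_card_edgeSet_eq_sum_ncard_neighborSet {V : Type*} [Fintype V]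
    (G : SimpleGraph V) : 2 * Nat.card G.edgeSet = ∑ v, (G.neighborSet v).ncard := by
  classical
  simp_rw [← Nat.card_coe_set_eq, Nat.card_eq_fintype_card, card_neighborSet_eq_degree,
    sum_degrees_eq_twice_card_edges, edgeFinset_card]

lemma exists_isSat_of_not_hasCopy {α V : Type*} [Finite V] {H : SimpleGraph α}
    {G₀ : SimpleGraph V} (h : ¬ hasCopy H G₀) : ∃ G : SimpleGraph V, isSat H G := by
  obtain ⟨G, -, hG⟩ := Finite.exists_le_maximal (p := fun G : SimpleGraph V ↦ ¬ hasCopy H G) h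
  refine ⟨G, hG.prop, fun x y hxy hn ↦ ?_⟩
  by_contra hfree
  exact hG.not_gt hfree (G.lt_sup_edge x y hxy hn)

lemma exists_isSat_card_edgeSet_eq_satNum {α : Type*} {H : SimpleGraph α} {n : ℕ}
    (h : ∃ G : SimpleGraph (Fin n), isSat H G) :
    ∃ G : SimpleGraph (Fin n), isSat H G ∧ Nat.card G.edgeSet = satNum H n :=
  Nat.sInf_mem (s := {m | ∃ G : SimpleGraph (Fin n), isSat H G ∧ Nat.card G.edgeSet = m})
    (let ⟨G, hG⟩ := h; ⟨_, G, hG, rfl⟩)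

lemma tendsto_div_natCast_of_abs_sub_mul_le {a : ℕ → ℝ} {c C : ℝ}
    (h : ∀ n : ℕ, |a n - n * c| ≤ C) : Tendsto (fun n : ℕ ↦ a n / n) atTop (𝓝 c) := by
  have hdev : Tendsto (fun n : ℕ ↦ (a n - n * c) / n) atTop (𝓝 0) := by
    refine squeeze_zero_norm' (Eventually.of_forall fun n ↦ ?_)
      (tendsto_const_div_atTop_nhds_zero_nat C)
    rw [norm_div, Real.norm_eq_abs, Real.norm_natCast]
    exact div_le_div_of_nonneg_right (h n) n.cast_nonneg
  have := hdev.add_const c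
  rw [zero_add] at this
  refine this.congr' ?_
  filter_upwards [eventually_ne_atTop 0] with n hn
  field_simp
  ring

section StarSaturated

variable {V : Type*} {G : SimpleGraph V} {k : ℕ}

lemma ncard_neighborSet_lt_of_not_hasCopy [Finite V]
    (h : ¬ hasCopy (addDom (⊥ : SimpleGraph (Fin k))) G) (v : V) :
    (G.neighborSet v).ncard < k := by
  by_contra! hv
  exact h ((hasCopy_addDom_bot_iff G).2 ⟨v, by rwa [Nat.card_fin]⟩)

lemma le_ncard_neighborSet_add_one_of_isSat [Finite V]
    (h : isSat (addDom (⊥ : SimpleGraph (Fin k))) G) {x y : V} (hxy : x ≠ y)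
    (hn : ¬ G.Adj x y) :
    k ≤ (G.neighborSet x).ncard + 1 ∨ k ≤ (G.neighborSet y).ncard + 1 := by
  have hcopy : hasCopy (addDom (⊥ : SimpleGraph (Fin k))) (G ⊔ edge x y) := h.2 x y hxy hn
  obtain ⟨v, hv⟩ := (hasCopy_addDom_bot_iff _).1 hcopy
  rw [Nat.card_fin] at hv
  by_cases hvx : v = x
  · subst hvx
    exact .inl (hv.trans (ncard_neighborSet_sup_edge_le G v y))
  by_cases hvy : v = y
  · subst hvy
    rw [edge_comm] at hv
    exact .inr (hv.trans (ncard_neighborSet_sup_edge_le G v x))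
  rw [neighborSet_sup_edge_of_ne G hvx hvy] at hv
  exact absurd hv (ncard_neighborSet_lt_of_not_hasCopy h.1 v).not_ge

lemma isClique_setOf_ncard_neighborSet_add_one_lt [Finite V]
    (h : isSat (addDom (⊥ : SimpleGraph (Fin k))) G) :
    G.IsClique {v | (G.neighborSet v).ncard + 1 < k} := by
  intro x (hx : _ + 1 < k) y (hy : _ + 1 < k) hxy
  by_contra hn
  have := le_ncard_neighborSet_add_one_of_isSat h hxy hn
  omega

lemma two_mul_card_edgeSet_le_of_not_hasCopy [Fintype V]
    (h : ¬ hasCopy (addDom (⊥ : SimpleGraph (Fin k))) G) :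
    2 * Nat.card G.edgeSet ≤ Fintype.card V * (k - 1) := by
  rw [two_mul_card_edgeSet_eq_sum_ncard_neighborSet, ← smul_eq_mul, ← Finset.card_univ,
    ← Finset.sum_const]
  gcongr with v
  have := ncard_neighborSet_lt_of_not_hasCopy h v
  omega

lemma card_mul_le_two_mul_card_edgeSet_of_isSat [Fintype V]
    (h : isSat (addDom (⊥ : SimpleGraph (Fin k))) G) :
    Fintype.card V * (k - 1) ≤ 2 * Nat.card G.edgeSet + (k - 1) * (k - 1) := by
  classical
  set S := Finset.univ.filter fun v ↦ (G.neighborSet v).ncard + 1 < k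
  have hS : S.card ≤ k - 1 := by
    obtain hS | ⟨v, hv⟩ := S.eq_empty_or_nonempty
    · simp [hS]
    have hclique : G.IsClique (S : Set V) := by
      simpa [S] using isClique_setOf_ncard_neighborSet_add_one_lt h
    have := hclique.ncard_le_ncard_neighborSet_add_one hv
    rw [Set.ncard_coe_finset] at this
    simp only [S, Finset.mem_filter] at hv
    omega
  have hSc : ∀ v ∈ Sᶜ, k - 1 ≤ (G.neighborSet v).ncard := by
    intro v hv
    simp only [S, Finset.mem_compl, Finset.mem_filter, Finset.mem_univ, true_and] at hv
    omega
  calc Fintype.card V * (k - 1) = S.card * (k - 1) + Sᶜ.card * (k - 1) := by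
        rw [← add_mul, Finset.card_add_card_compl]
    _ ≤ (k - 1) * (k - 1) + ∑ v ∈ Sᶜ, (G.neighborSet v).ncard := by
        gcongr
        simpa using Sᶜ.card_nsmul_le_sum _ _ hSc
    _ ≤ (k - 1) * (k - 1) + ∑ v, (G.neighborSet v).ncard := by
        gcongr
        exact Finset.subset_univ _
    _ = 2 * Nat.card G.edgeSet + (k - 1) * (k - 1) := by
        rw [two_mul_card_edgeSet_eq_sum_ncard_neighborSet, add_comm]

end StarSaturated

lemma satNum_addDom_bot_bounds {k : ℕ} (hk : 1 ≤ k) (n : ℕ) :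
    2 * satNum (addDom (⊥ : SimpleGraph (Fin k))) n ≤ n * (k - 1) ∧
      n * (k - 1) ≤ 2 * satNum (addDom (⊥ : SimpleGraph (Fin k))) n + (k - 1) * (k - 1) := by
  have hbot : ¬ hasCopy (addDom (⊥ : SimpleGraph (Fin k))) (⊥ : SimpleGraph (Fin n)) := by
    simp only [hasCopy_addDom_bot_iff, neighborSet_bot, Set.ncard_empty, Nat.card_fin]
    omega
  obtain ⟨G, hG, hcard⟩ := exists_isSat_card_edgeSet_eq_satNum (exists_isSat_of_not_hasCopy hbot)
  have hupper := two_mul_card_edgeSet_le_of_not_hasCopy hG.1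
  have hlower := card_mul_le_two_mul_card_edgeSet_of_isSat hG
  rw [Fintype.card_fin, hcard] at hupper hlower
  exact ⟨hupper, hlower⟩

/-- For the star `K_{1,k}` (realized as the empty graph on `k` vertices plus a
dominating vertex), `sat(K_{1,k}, n)/n` tends to `(k-1)/2`. -/
theorem stmt11 (k : ℕ) (hk : 1 ≤ k) :
    Filter.Tendsto
      (fun n : ℕ => (satNum (addDom (⊥ : SimpleGraph (Fin k))) n : ℝ) / n)
      Filter.atTop (nhds (((k : ℝ) - 1) / 2)) := by
  obtain ⟨m, rfl⟩ : ∃ m, k = m + 1 := ⟨k - 1, by omega⟩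
  refine tendsto_div_natCast_of_abs_sub_mul_le (C := m * m / 2) fun n ↦ ?_
  obtain ⟨hupper, hlower⟩ := satNum_addDom_bot_bounds hk n
  simp only [add_tsub_cancel_right] at hupper hlower
  have hupper' : (2 * satNum (addDom (⊥ : SimpleGraph (Fin (m + 1)))) n : ℝ) ≤ n * m := by
    exact_mod_cast hupper
  have hlower' : (n * m : ℝ) ≤ 2 * satNum (addDom (⊥ : SimpleGraph (Fin (m + 1)))) n + m * m := by
    exact_mod_cast hlower
  push_cast
  rw [abs_le]
  constructor <;> linarith
end

section
/- Let 2 ≤ p_1 ≤ ⋯ ≤ p_m, H = K_{p_1} ∪ ⋯ ∪ K_{p_m}, t = 1 + p_2 + ⋯ + p_m, and for n ≥ p_1 + ⋯ + p_m let G = K_{p_1 − 2} ∨ (K_t ∪ I), the join of a clique on p_1 − 2 vertices with the disjoint union of a clique on t vertices and an independent set I of n − t − p_1 + 2 vertices. Then G contains no subgraph isomorphic to H. -/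
open SimpleGraph

/-- The disjoint union of cliques `K_{p 0} ∪ ... ∪ K_{p (m-1)}`. -/
def cliqueUnion (m : ℕ) (p : Fin m → ℕ) : SimpleGraph (Σ i : Fin m, Fin (p i)) :=
  SimpleGraph.fromRel (fun x y => x.1 = y.1)

/-- The graph `K_a ∨ (K_t ∪ I_s)`: the join of a clique on `a` vertices with the
disjoint union of a clique on `t` vertices and an independent set of `s` vertices. -/
def satConstr (a t s : ℕ) : SimpleGraph (Fin a ⊕ (Fin t ⊕ Fin s)) :=
  SimpleGraph.fromRel (fun x y =>
    (∃ i, x = Sum.inl i) ∨ (∃ i j, x = Sum.inr (Sum.inl i) ∧ y = Sum.inr (Sum.inl j)))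

/-- With `2 <= p_1 <= ... <= p_m`, `t = 1 + p_2 + ... + p_m` and `n >= p_1 + ... + p_m`,
the graph `K_{p_1-2} ∨ (K_t ∪ I)` with `|I| = n - t - p_1 + 2` contains no copy of
`H = K_{p_1} ∪ ... ∪ K_{p_m}`. -/
theorem stmt14 (m : ℕ) (hm : 0 < m) (p : Fin m → ℕ) (hp : ∀ i, 2 ≤ p i) (hmono : Monotone p)
    (t n : ℕ) (ht : t = 1 + (∑ i, p i) - p ⟨0, hm⟩) (hn : ∑ i, p i ≤ n) :
    ¬ hasCopy (cliqueUnion m p)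
        (satConstr (p ⟨0, hm⟩ - 2) t (n - t - (p ⟨0, hm⟩ - 2))) := by
  rintro ⟨f, hf⟩
  have hp0 : 2 ≤ p ⟨0, hm⟩ := hp _
  -- No vertex maps to the independent set
  have key : ∀ v : (Σ i : Fin m, Fin (p i)), ∀ k : Fin (n - t - (p ⟨0, hm⟩ - 2)),
      f v ≠ Sum.inr (Sum.inr k) := by
    rintro ⟨i, j⟩ k hfk
    have hadj : ∀ j' : Fin (p i), j' ≠ j →
        ∃ x : Fin (p ⟨0, hm⟩ - 2), f ⟨i, j'⟩ = Sum.inl x := by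
      intro j' hj'
      have hAdj : (cliqueUnion m p).Adj ⟨i, j'⟩ ⟨i, j⟩ := by
        simp only [cliqueUnion, SimpleGraph.fromRel_adj]
        exact ⟨fun h => hj' (by simpa using h), by simp⟩
      have h2 := f.map_adj hAdj
      rw [hfk] at h2
      simp only [satConstr, SimpleGraph.fromRel_adj] at h2
      obtain ⟨-, h2 | h2⟩ := h2
      · rcases h2 with ⟨x, hx⟩ | ⟨x, y, hx, hy⟩
        · exact ⟨x, hx⟩
        · simp at hy
      · rcases h2 with ⟨x, hx⟩ | ⟨x, y, hx, hy⟩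
        · simp at hx
        · simp at hx
    choose g hg using hadj
    have hinj : Function.Injective (fun x : {j' : Fin (p i) // j' ≠ j} => g x.1 x.2) := by
      rintro ⟨x, hx⟩ ⟨y, hy⟩ hxy
      have hfe : f ⟨i, x⟩ = f ⟨i, y⟩ := by
        rw [hg x hx, hg y hy]
        simpa using hxy
      have := hf hfe
      simpa using this
    have hcard := Fintype.card_le_of_injective _ hinj
    have hcs : Fintype.card {j' : Fin (p i) // j' ≠ j} = p i - 1 := by
      simp [Fintype.card_subtype_compl]
    rw [hcs, Fintype.card_fin] at hcard
    have hle : p ⟨0, hm⟩ ≤ p i := hmono (by exact Fin.mk_le_of_le_val (Nat.zero_le _))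
    omega
  have key2 : ∀ v, ∃ y : Fin (p ⟨0, hm⟩ - 2) ⊕ Fin t, f v = Sum.map id Sum.inl y := by
    intro v
    rcases hv : f v with x | x | k
    · exact ⟨Sum.inl x, rfl⟩
    · exact ⟨Sum.inr x, rfl⟩
    · exact absurd hv (key v k)
  choose g hg using key2
  have hginj : Function.Injective g := by
    intro v w hvw
    apply hf
    rw [hg v, hg w, hvw]
  have hcard := Fintype.card_le_of_injective _ hginj
  simp only [Fintype.card_sigma, Fintype.card_fin, Fintype.card_sum] at hcard
  have hsum : p ⟨0, hm⟩ ≤ ∑ i, p i :=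
    Finset.single_le_sum (fun i _ => Nat.zero_le _) (Finset.mem_univ _)
  omega
end

section
/- Let 2 ≤ p_1 ≤ ⋯ ≤ p_m, H = K_{p_1} ∪ ⋯ ∪ K_{p_m}, t = 1 + p_2 + ⋯ + p_m, and G = K_{p_1 − 2} ∨ (K_t ∪ I) with I an independent set of n − t − p_1 + 2 ≥ 0 vertices. Then for every non-edge xy of G, the graph G + xy contains a subgraph isomorphic to H; hence G is H-saturated. -/
open SimpleGraph

lemma satConstr_adj_left {a t s : ℕ} (i : Fin a) (z : Fin a ⊕ (Fin t ⊕ Fin s))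
    (h : Sum.inl i ≠ z) : (satConstr a t s).Adj (Sum.inl i) z := by
  simp only [satConstr, SimpleGraph.fromRel_adj]
  exact ⟨h, Or.inl (Or.inl ⟨i, rfl⟩)⟩

lemma satConstr_adj_T {a t s : ℕ} (v w : Fin t) (h : v ≠ w) :
    (satConstr a t s).Adj (Sum.inr (Sum.inl v)) (Sum.inr (Sum.inl w)) := by
  simp only [satConstr, SimpleGraph.fromRel_adj]
  exact ⟨by simp [h], Or.inl (Or.inr ⟨v, w, rfl, rfl⟩)⟩

lemma satConstr_I_adj {a t s : ℕ} (w : Fin s) (z : Fin a ⊕ (Fin t ⊕ Fin s))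
    (h : (satConstr a t s).Adj (Sum.inr (Sum.inr w)) z) : ∃ i, z = Sum.inl i := by
  simp only [satConstr, SimpleGraph.fromRel_adj] at h
  obtain ⟨-, h | h⟩ := h
  · rcases h with ⟨i, h⟩ | ⟨i, j, h, -⟩ <;> simp at h
  · rcases h with ⟨i, h⟩ | ⟨i, j, -, h⟩
    · exact ⟨i, h⟩
    · simp at h

/-- The copy-building map. -/
def buildF (m : ℕ) (hm : 0 < m) (p : Fin m → ℕ) (t s : ℕ)
    (x y : Fin (p ⟨0, hm⟩ - 2) ⊕ (Fin t ⊕ Fin s)) (c : Fin t)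
    (e : {u : Σ i : Fin m, Fin (p i) // u.1 ≠ ⟨0, hm⟩} ↪ {v : Fin t // v ≠ c}) :
    (Σ i : Fin m, Fin (p i)) → Fin (p ⟨0, hm⟩ - 2) ⊕ (Fin t ⊕ Fin s) := fun u =>
  if h : u.1 = ⟨0, hm⟩ then
    if h0 : (Fin.cast (congrArg p h) u.2).val = 0 then x
    else if h1 : (Fin.cast (congrArg p h) u.2).val = 1 then y
    else Sum.inl ⟨(Fin.cast (congrArg p h) u.2).val - 2,
      by have := (Fin.cast (congrArg p h) u.2).isLt; omega⟩
  else Sum.inr (Sum.inl (e ⟨u, h⟩).1)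

lemma buildF_inj (m : ℕ) (hm : 0 < m) (p : Fin m → ℕ) (t s : ℕ)
    (x y : Fin (p ⟨0, hm⟩ - 2) ⊕ (Fin t ⊕ Fin s)) (c : Fin t)
    (e : {u : Σ i : Fin m, Fin (p i) // u.1 ≠ ⟨0, hm⟩} ↪ {v : Fin t // v ≠ c})
    (hxy : x ≠ y)
    (hxA : ∀ i, x ≠ Sum.inl i) (hyA : ∀ i, y ≠ Sum.inl i)
    (hc : ∀ v : Fin t, v ≠ c → (Sum.inr (Sum.inl v) : Fin (p ⟨0, hm⟩ - 2) ⊕ (Fin t ⊕ Fin s)) ≠ x ∧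
      (Sum.inr (Sum.inl v) : Fin (p ⟨0, hm⟩ - 2) ⊕ (Fin t ⊕ Fin s)) ≠ y) :
    Function.Injective (buildF m hm p t s x y c e) := by
  rintro ⟨i, j⟩ ⟨i', j'⟩ hf
  by_cases h1 : i = (⟨0, hm⟩ : Fin m) <;> by_cases h2 : i' = (⟨0, hm⟩ : Fin m)
  · subst h1; subst h2
    simp only [buildF, dif_pos, Fin.coe_cast] at hf
    have hj := j.isLt; have hj' := j'.isLt
    split_ifs at hf with a1 a2 a3 a4 a5 a6 a7 a8
    · simp only [Sigma.mk.inj_iff, heq_eq_eq, true_and]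
      exact Fin.ext (by omega)
    · exact absurd hf hxy
    · exact absurd hf (hxA _)
    · exact absurd hf.symm hxy
    · simp only [Sigma.mk.inj_iff, heq_eq_eq, true_and]
      exact Fin.ext (by omega)
    · exact absurd hf (hyA _)
    · exact absurd hf.symm (hxA _)
    · exact absurd hf.symm (hyA _)
    · simp only [Sum.inl.injEq, Fin.mk.injEq] at hf
      simp only [Sigma.mk.inj_iff, heq_eq_eq, true_and]
      exact Fin.ext (by omega)
  · exfalso
    subst h1
    simp only [buildF, dif_pos, dif_neg h2, Fin.coe_cast] at hf
    obtain ⟨hx', hy'⟩ := hc _ (e ⟨⟨i', j'⟩, h2⟩).2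
    split_ifs at hf
    all_goals first | exact hx' hf.symm | exact hy' hf.symm | simp at hf
  · exfalso
    subst h2
    simp only [buildF, dif_pos, dif_neg h1, Fin.coe_cast] at hf
    obtain ⟨hx', hy'⟩ := hc _ (e ⟨⟨i, j⟩, h1⟩).2
    split_ifs at hf
    all_goals first | exact hx' hf | exact hy' hf | simp at hf
  · simp only [buildF, dif_neg h1, dif_neg h2] at hf
    have h3 : e ⟨⟨i, j⟩, h1⟩ = e ⟨⟨i', j'⟩, h2⟩ := Subtype.ext (by simpa using hf)
    simpa using e.injective h3

lemma buildF_hom (m : ℕ) (hm : 0 < m) (p : Fin m → ℕ) (t s : ℕ)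
    (x y : Fin (p ⟨0, hm⟩ - 2) ⊕ (Fin t ⊕ Fin s)) (c : Fin t)
    (e : {u : Σ i : Fin m, Fin (p i) // u.1 ≠ ⟨0, hm⟩} ↪ {v : Fin t // v ≠ c})
    (hxy : x ≠ y) (hxA : ∀ i, x ≠ Sum.inl i) (hyA : ∀ i, y ≠ Sum.inl i) :
    ∀ u v : Σ i : Fin m, Fin (p i), (cliqueUnion m p).Adj u v →
      (satConstr (p ⟨0, hm⟩ - 2) t s ⊔ SimpleGraph.fromEdgeSet {s(x, y)}).Adj
        (buildF m hm p t s x y c e u) (buildF m hm p t s x y c e v) := by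
  have hxyadj : (satConstr (p ⟨0, hm⟩ - 2) t s ⊔ SimpleGraph.fromEdgeSet {s(x, y)}).Adj x y := by
    rw [SimpleGraph.sup_adj, SimpleGraph.fromEdgeSet_adj]
    exact Or.inr ⟨rfl, hxy⟩
  have hadjA : ∀ (c' : Fin (p ⟨0, hm⟩ - 2)) z, Sum.inl c' ≠ z →
      (satConstr (p ⟨0, hm⟩ - 2) t s ⊔ SimpleGraph.fromEdgeSet {s(x, y)}).Adj (Sum.inl c') z :=
    fun c' z h => Or.inl (satConstr_adj_left c' z h)
  rintro ⟨i, j⟩ ⟨i', j'⟩ hadj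
  obtain ⟨hne, hii⟩ : (⟨i, j⟩ : Σ i, Fin (p i)) ≠ ⟨i', j'⟩ ∧ i = i' := by
    have := hadj
    simp only [cliqueUnion, SimpleGraph.fromRel_adj] at this
    exact ⟨this.1, this.2.elim id Eq.symm⟩
  subst hii
  have hjj : j.val ≠ j'.val := fun h => hne (by simp [Fin.ext h])
  by_cases h1 : i = (⟨0, hm⟩ : Fin m)
  · subst h1
    have hj := j.isLt; have hj' := j'.isLt
    simp only [buildF, dif_pos, Fin.coe_cast]
    split_ifs with a1 a2 a3 a4 a5 a6 a7 a8
    · omega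
    · exact hxyadj
    · exact ((hadjA _ x (fun h => hxA _ h.symm)).symm)
    · exact hxyadj.symm
    · omega
    · exact ((hadjA _ y (fun h => hyA _ h.symm)).symm)
    · exact hadjA _ x (fun h => hxA _ h.symm)
    · exact hadjA _ y (fun h => hyA _ h.symm)
    · exact hadjA _ _ (by simp only [ne_eq, Sum.inl.injEq, Fin.mk.injEq]; omega)
  · simp only [buildF, dif_neg h1]
    refine Or.inl (satConstr_adj_T _ _ ?_)
    intro hv
    have h3 : e ⟨⟨i, j⟩, h1⟩ = e ⟨⟨i, j'⟩, h1⟩ := Subtype.ext hv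
    have h4 := e.injective h3
    simp only [Subtype.mk.injEq, Sigma.mk.inj_iff, heq_eq_eq, true_and] at h4
    exact hjj (by rw [h4])

def fiberEquiv (m : ℕ) (hm : 0 < m) (p : Fin m → ℕ) :
    {u : Σ i : Fin m, Fin (p i) // u.1 = ⟨0, hm⟩} ≃ Fin (p ⟨0, hm⟩) where
  toFun u := Fin.cast (congrArg p u.2) u.1.2
  invFun j := ⟨⟨⟨0, hm⟩, j⟩, rfl⟩
  left_inv := by
    rintro ⟨⟨i, j⟩, h⟩
    dsimp only at h
    subst h
    rfl
  right_inv j := rfl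

lemma aux_copy (m : ℕ) (hm : 0 < m) (p : Fin m → ℕ) (hp : ∀ i, 2 ≤ p i)
    (t s : ℕ) (ht : t = 1 + (∑ i, p i) - p ⟨0, hm⟩)
    (x y : Fin (p ⟨0, hm⟩ - 2) ⊕ (Fin t ⊕ Fin s)) (hxy : x ≠ y)
    (hnadj : ¬ (satConstr (p ⟨0, hm⟩ - 2) t s).Adj x y) :
    hasCopy (cliqueUnion m p)
      (satConstr (p ⟨0, hm⟩ - 2) t s ⊔ SimpleGraph.fromEdgeSet {s(x, y)}) := by
  classical
  have hp0 : p ⟨0, hm⟩ ≤ ∑ i, p i :=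
    Finset.single_le_sum (fun i _ => Nat.zero_le _) (Finset.mem_univ _)
  have ht1 : 1 ≤ t := by omega
  have hxA : ∀ i, x ≠ Sum.inl i := by
    rintro i rfl; exact hnadj (satConstr_adj_left i y hxy)
  have hyA : ∀ i, y ≠ Sum.inl i := by
    rintro i rfl; exact hnadj (satConstr_adj_left i x (Ne.symm hxy)).symm
  have hnotT : ∀ v w : Fin t, ¬ (x = Sum.inr (Sum.inl v) ∧ y = Sum.inr (Sum.inl w)) := by
    rintro v w ⟨rfl, rfl⟩
    refine hnadj (satConstr_adj_T v w ?_)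
    rintro rfl; exact hxy rfl
  obtain ⟨c, hc⟩ : ∃ c : Fin t, ∀ v : Fin t, v ≠ c →
      (Sum.inr (Sum.inl v) : Fin (p ⟨0, hm⟩ - 2) ⊕ (Fin t ⊕ Fin s)) ≠ x ∧
      (Sum.inr (Sum.inl v) : Fin (p ⟨0, hm⟩ - 2) ⊕ (Fin t ⊕ Fin s)) ≠ y := by
    rcases x with i | v | wx
    · exact absurd rfl (hxA i)
    · exact ⟨v, fun v' hv' =>
        ⟨fun h => hv' (by simpa using h), fun h => hnotT v v' ⟨rfl, h.symm⟩⟩⟩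
    · rcases y with i | w | wy
      · exact absurd rfl (hyA i)
      · exact ⟨w, fun v' hv' => ⟨by simp, fun h => hv' (by simpa using h)⟩⟩
      · exact ⟨⟨0, ht1⟩, fun v' _ => ⟨by simp, by simp⟩⟩
  obtain ⟨e⟩ : Nonempty ({u : Σ i : Fin m, Fin (p i) // u.1 ≠ ⟨0, hm⟩} ↪ {v : Fin t // v ≠ c}) := by
    apply Function.Embedding.nonempty_of_card_le
    have h1 : Fintype.card {u : Σ i : Fin m, Fin (p i) // u.1 ≠ ⟨0, hm⟩}
        = (∑ i, p i) - p ⟨0, hm⟩ := by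
      have h : Fintype.card {u : Σ i : Fin m, Fin (p i) // u.1 = ⟨0, hm⟩} = p ⟨0, hm⟩ := by
        rw [Fintype.card_congr (fiberEquiv m hm p), Fintype.card_fin]
      rw [Fintype.card_subtype_compl, h, Fintype.card_sigma]
      simp
    have h2 : Fintype.card {v : Fin t // v ≠ c} = t - 1 := by
      rw [Fintype.card_subtype_compl, Fintype.card_subtype_eq, Fintype.card_fin]
    rw [h1, h2]
    omega
  exact ⟨⟨buildF m hm p t s x y c e, fun {u v} h => buildF_hom m hm p t s x y c e hxy hxA hyA u v h⟩,
    buildF_inj m hm p t s x y c e hxy hxA hyA hc⟩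

lemma aux_free (m : ℕ) (hm : 0 < m) (p : Fin m → ℕ) (hp : ∀ i, 2 ≤ p i) (hmono : Monotone p)
    (t s : ℕ) (ht : t = 1 + (∑ i, p i) - p ⟨0, hm⟩) :
    ¬ hasCopy (cliqueUnion m p) (satConstr (p ⟨0, hm⟩ - 2) t s) := by
  classical
  rintro ⟨f, hfinj⟩
  have hp0 : p ⟨0, hm⟩ ≤ ∑ i, p i :=
    Finset.single_le_sum (fun i _ => Nat.zero_le _) (Finset.mem_univ _)
  have step1 : ∀ u : Σ i : Fin m, Fin (p i), ∀ w : Fin s, f u ≠ Sum.inr (Sum.inr w) := by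
    rintro ⟨i, j⟩ w hLw
    have hadj : ∀ j' : Fin (p i), j' ≠ j → ∃ cc, f ⟨i, j'⟩ = Sum.inl cc := by
      intro j' hj'
      have hne : (⟨i, j⟩ : Σ i, Fin (p i)) ≠ ⟨i, j'⟩ := by
        simp only [ne_eq, Sigma.mk.inj_iff, heq_eq_eq, true_and]
        exact fun h => hj' h.symm
      have hH : (cliqueUnion m p).Adj ⟨i, j⟩ ⟨i, j'⟩ :=
        (SimpleGraph.fromRel_adj _ _ _).mpr ⟨hne, Or.inl rfl⟩
      have h2 := f.map_adj hH
      rw [hLw] at h2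
      exact satConstr_I_adj w _ h2
    have hcard : Fintype.card {j' : Fin (p i) // j' ≠ j}
        ≤ Fintype.card (Fin (p ⟨0, hm⟩ - 2)) := by
      refine Fintype.card_le_of_injective
        (fun j' => Classical.choose (hadj j'.1 j'.2)) ?_
      intro a b hab
      have ha := Classical.choose_spec (hadj a.1 a.2)
      have hb := Classical.choose_spec (hadj b.1 b.2)
      have h3 : f ⟨i, a.1⟩ = f ⟨i, b.1⟩ := by
        rw [ha, hb]; exact congrArg Sum.inl hab
      have h4 := hfinj h3
      exact Subtype.ext (by simpa using h4)
    rw [Fintype.card_subtype_compl, Fintype.card_subtype_eq] at hcard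
    simp only [Fintype.card_fin] at hcard
    have hmi : p ⟨0, hm⟩ ≤ p i := hmono (by simp [Fin.le_def])
    have h5 := hp ⟨0, hm⟩
    omega
  have himg : (Finset.univ.image f) ⊆ Finset.univ \
      (Finset.univ.image (fun w : Fin s =>
        (Sum.inr (Sum.inr w) : Fin (p ⟨0, hm⟩ - 2) ⊕ (Fin t ⊕ Fin s)))) := by
    intro v hv
    simp only [Finset.mem_image, Finset.mem_univ, true_and, Finset.mem_sdiff] at hv ⊢
    obtain ⟨u, rfl⟩ := hv
    rintro ⟨w, hw⟩
    exact step1 u w hw.symm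
  have hcard := Finset.card_le_card himg
  rw [Finset.card_image_of_injective _ hfinj,
    Finset.card_sdiff_of_subset (Finset.subset_univ _),
    Finset.card_image_of_injective _
      (show Function.Injective (fun w : Fin s =>
        (Sum.inr (Sum.inr w) : Fin (p ⟨0, hm⟩ - 2) ⊕ (Fin t ⊕ Fin s)))
        from fun a b h => by simpa using h)] at hcard
  simp only [Finset.card_univ, Fintype.card_sigma, Fintype.card_sum, Fintype.card_fin] at hcard
  have h5 := hp ⟨0, hm⟩
  omega

/-- With `2 <= p_1 <= ... <= p_m` and `t = 1 + p_2 + ... + p_m`, adding any missing edge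
to `G = K_{p_1-2} ∨ (K_t ∪ I)` creates a copy of `H = K_{p_1} ∪ ... ∪ K_{p_m}`; hence
`G` is `H`-saturated. -/
theorem stmt15 (m : ℕ) (hm : 0 < m) (p : Fin m → ℕ) (hp : ∀ i, 2 ≤ p i) (hmono : Monotone p)
    (t n : ℕ) (ht : t = 1 + (∑ i, p i) - p ⟨0, hm⟩) (hn : ∑ i, p i ≤ n)
    (G : SimpleGraph (Fin (p ⟨0, hm⟩ - 2) ⊕ (Fin t ⊕ Fin (n - t - (p ⟨0, hm⟩ - 2)))))
    (hG : G = satConstr (p ⟨0, hm⟩ - 2) t (n - t - (p ⟨0, hm⟩ - 2))) :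
    (∀ x y, x ≠ y → ¬ G.Adj x y →
        hasCopy (cliqueUnion m p) (G ⊔ SimpleGraph.fromEdgeSet {s(x, y)})) ∧
      isSat (cliqueUnion m p) G := by
  subst hG
  refine ⟨fun x y hxy hnadj => aux_copy m hm p hp t _ ht x y hxy hnadj,
    aux_free m hm p hp hmono t _ ht,
    fun x y hxy hnadj => aux_copy m hm p hp t _ ht x y hxy hnadj⟩
end

section
/- Every graph G with vertex set {v_1, …, v_n} for which there exist real weights x_1, …, x_n with v_i v_j ∈ E(G) ⟺ x_i + x_j ≥ 0 (for i ≠ j) can be obtained from a single vertex by iteratively adding, at each step, either an isolated vertex or a vertex adjacent to all previously added vertices. -/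
open SimpleGraph

/-! Order the vertices by `|x v|`, breaking ties by `x v`. For `u` after `v` we then have
`-|x u| ≤ x v ≤ |x u|`, with `x v ≤ x u` in case of equality, so the sign of `x u + x v` is the sign
of `x u`: a vertex of nonnegative weight is adjacent to all earlier vertices, one of negative
weight to none. -/

lemma add_nonneg_iff_of_toLex_abs_le {K : Type*} [Field K] [LinearOrder K] [IsStrictOrderedRing K]
    {a b : K} (h : toLex (|b|, b) ≤ toLex (|a|, a)) : 0 ≤ a + b ↔ 0 ≤ a := by
  rcases Prod.Lex.toLex_le_toLex.mp h with hlt | ⟨heq, hle⟩ <;>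
    rcases abs_cases a with ⟨ha, _⟩ | ⟨ha, _⟩ <;> rcases abs_cases b with ⟨hb, _⟩ | ⟨hb, _⟩ <;>
    constructor <;> intro <;> linarith

/-- Every threshold graph (given by vertex weights) can be built by iteratively adding,
at each step, either an isolated vertex or a dominating vertex: there is an ordering of
the vertices in which every vertex is adjacent to all, or to none, of the earlier ones. -/
theorem stmt17 (n : ℕ) (G : SimpleGraph (Fin n)) (x : Fin n → ℝ)
    (h : ∀ i j : Fin n, i ≠ j → (G.Adj i j ↔ 0 ≤ x i + x j)) :
    ∃ σ : Equiv.Perm (Fin n), ∀ i : Fin n,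
      (∀ j, j < i → G.Adj (σ i) (σ j)) ∨ (∀ j, j < i → ¬ G.Adj (σ i) (σ j)) := by
  set σ := Tuple.sort fun v => toLex (|x v|, x v)
  have adj_iff {i j : Fin n} (hji : j < i) : G.Adj (σ i) (σ j) ↔ 0 ≤ x (σ i) :=
    (h _ _ (σ.injective.ne hji.ne')).trans
      (add_nonneg_iff_of_toLex_abs_le (Tuple.monotone_sort (fun v => toLex (|x v|, x v)) hji.le))
  refine ⟨σ, fun i => ?_⟩
  by_cases hi : 0 ≤ x (σ i)
  · exact Or.inl fun j hj => (adj_iff hj).2 hi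
  · exact Or.inr fun j hj => mt (adj_iff hj).1 hi
end
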